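/- The M'₄ kernel conserves the second moment on the integer lattice: for every x ∈ ℝ, the sum over all integers k of k² · M'₄(x - k) equals x². -/

import Mathlib

noncomputable def M4 (ρ : ℝ) : ℝ :=
  if |ρ| < 1 then 1 - (5 / 2) * ρ ^ 2 + (3 / 2) * |ρ| ^ 3
  else if |ρ| < 2 then (1 / 2) * (2 - |ρ|) ^ 2 * (1 - |ρ|)
  else 0

/-!
Writing `x = n + t` with `n = ⌊x⌋` and `t ∈ [0, 1)`, only the four nodes `k = n - 1, …, n + 2` lie
within the support `[-2, 2]` of `M4`. On `[0, 1]` the four weights `M4 (t + 1), M4 t, M4 (t - 1),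
M4 (t - 2)` are cubics in `t` whose moments of order `0, 1, 2` about the node `n` are `1, t, t²`,
so the weighted sum of `k²` is the polynomial identity `∑ (n + j)² M4 (t - j) = (n + t)²`.
-/

open Finset

lemma M4_of_abs_le_one {ρ : ℝ} (h : |ρ| ≤ 1) :
    M4 ρ = 1 - 5 / 2 * ρ ^ 2 + 3 / 2 * |ρ| ^ 3 := by
  unfold M4
  rcases h.lt_or_eq with h | h
  · rw [if_pos h]
  · rw [if_neg (by linarith), if_pos (by rw [h]; norm_num), ← sq_abs ρ, h]
    norm_num

lemma M4_of_one_le_abs {ρ : ℝ} (h₁ : 1 ≤ |ρ|) (h₂ : |ρ| ≤ 2) :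
    M4 ρ = 1 / 2 * (2 - |ρ|) ^ 2 * (1 - |ρ|) := by
  unfold M4
  rw [if_neg h₁.not_gt]
  rcases h₂.lt_or_eq with h₂ | h₂
  · rw [if_pos h₂]
  · rw [if_neg (by linarith), h₂]
    norm_num

lemma M4_of_two_le_abs {ρ : ℝ} (h : 2 ≤ |ρ|) : M4 ρ = 0 := by
  unfold M4
  rw [if_neg (by linarith), if_neg (by linarith)]

lemma M4_sub_intCast_of_notMem_Icc {x : ℝ} {k : ℤ} (hk : k ∉ Icc (⌊x⌋ - 1) (⌊x⌋ + 2)) :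
    M4 (x - k) = 0 := by
  have hx₀ := Int.floor_le x
  have hx₁ := Int.lt_floor_add_one x
  rw [mem_Icc, not_and_or, not_le, not_le] at hk
  apply M4_of_two_le_abs
  rw [le_abs]
  rcases hk with hk | hk
  · left
    have : (k : ℝ) ≤ ⌊x⌋ - 2 := by exact_mod_cast (by omega : k ≤ ⌊x⌋ - 2)
    linarith
  · right
    have : (⌊x⌋ : ℝ) + 3 ≤ k := by exact_mod_cast (by omega : ⌊x⌋ + 3 ≤ k)
    linarith

lemma M4_second_moment_of_le_of_le {x n : ℝ} (h₀ : n ≤ x) (h₁ : x ≤ n + 1) :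
    (n - 1) ^ 2 * M4 (x - (n - 1)) + (n ^ 2 * M4 (x - n) +
      ((n + 1) ^ 2 * M4 (x - (n + 1)) + (n + 2) ^ 2 * M4 (x - (n + 2)))) = x ^ 2 := by
  have a₀ : |x - (n - 1)| = x - n + 1 := by rw [abs_of_nonneg (by linarith)]; ring
  have a₁ : |x - n| = x - n := abs_of_nonneg (by linarith)
  have a₂ : |x - (n + 1)| = n + 1 - x := by rw [abs_of_nonpos (by linarith)]; ring
  have a₃ : |x - (n + 2)| = n + 2 - x := by rw [abs_of_nonpos (by linarith)]; ring
  rw [M4_of_one_le_abs (by rw [a₀]; linarith) (by rw [a₀]; linarith),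
    M4_of_abs_le_one (by rw [a₁]; linarith), M4_of_abs_le_one (by rw [a₂]; linarith),
    M4_of_one_le_abs (by rw [a₃]; linarith) (by rw [a₃]; linarith), a₀, a₁, a₂, a₃]
  ring

/-- The M'₄ kernel conserves the second moment on the integer lattice. -/
theorem M4_second_moment (x : ℝ) :
    ∑' k : ℤ, (k : ℝ) ^ 2 * M4 (x - (k : ℝ)) = x ^ 2 := by
  rw [tsum_eq_sum (s := Icc (⌊x⌋ - 1) (⌊x⌋ + 2))
    fun k hk => by rw [M4_sub_intCast_of_notMem_Icc hk, mul_zero]]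
  have hIcc : Icc (⌊x⌋ - 1) (⌊x⌋ + 2) = {⌊x⌋ - 1, ⌊x⌋, ⌊x⌋ + 1, ⌊x⌋ + 2} := by
    ext; simp only [mem_Icc, mem_insert, mem_singleton]; omega
  rw [hIcc, sum_insert (by simp only [mem_insert, mem_singleton]; omega),
    sum_insert (by simp only [mem_insert, mem_singleton]; omega),
    sum_insert (by simp only [mem_singleton]; omega), sum_singleton]
  push_cast
  exact M4_second_moment_of_le_of_le (Int.floor_le x) (Int.lt_floor_add_one x).le
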